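/- Policy improvement for causal-weighted soft RL: let S, A be finite sets, γ ∈ [0,1), r : S × A → ℝ, c : Π × S → ℝ a policy-dependent bonus (c(π,s) = α·H^B(π(·|s))), and for a policy π define Q^π as the unique fixed point of the corresponding Bellman operator. Suppose π̃ is a policy satisfying, for every state s, E_{a∼π̃(·|s)}[Q^π(s,a)] + c(π̃,s) ≥ E_{a∼π(·|s)}[Q^π(s,a)] + c(π,s). Then Q^{π̃}(s,a) ≥ Q^π(s,a) for all (s,a) ∈ S × A. -/

import Mathlib

/-!
The gap `D := Q^π - Q^π̃` satisfies `D(s,a) ≤ γ · E_{s' ∼ P(s,a), a' ∼ π̃(s')} D(s',a')`: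
subtracting the two Bellman equations, the improvement hypothesis lets one replace the `π`-average
of `Q^π` plus bonus by the `π̃`-average, leaving only the `π̃`-average of `D`. Hence
`max D ≤ γ · max D`, and `γ < 1` forces `max D ≤ 0`.
-/

open Finset

theorem weighted_sum_le_of_le {ι : Type*} [Fintype ι] {w f : ι → ℝ} {M : ℝ}
    (hw0 : ∀ i, 0 ≤ w i) (hw1 : ∑ i, w i = 1) (hf : ∀ i, f i ≤ M) :
    ∑ i, w i * f i ≤ M :=
  calc ∑ i, w i * f i ≤ ∑ i, w i * M :=
        sum_le_sum fun i _ => mul_le_mul_of_nonneg_left (hf i) (hw0 i)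
    _ = M := by rw [← sum_mul, hw1, one_mul]

theorem nonpos_of_le_mul_bound {ι : Type*} [Finite ι] {f : ι → ℝ} {γ : ℝ} (hγ : γ < 1)
    (hf : ∀ M, (∀ j, f j ≤ M) → ∀ i, f i ≤ γ * M) (i : ι) : f i ≤ 0 := by
  have : Nonempty ι := ⟨i⟩
  obtain ⟨j, hj⟩ := Finite.exists_max f
  have hfj : f j ≤ γ * f j := hf (f j) hj j
  have hj0 : f j ≤ 0 := by nlinarith
  exact (hj i).trans hj0

theorem bellman_gap_le {S A : Type*} [Fintype S] [Fintype A] {γ : ℝ} (hγ0 : 0 ≤ γ)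
    {r : S × A → ℝ} {P : S × A → S → ℝ} (hP0 : ∀ sa s', 0 ≤ P sa s')
    {c : (S → A → ℝ) → S → ℝ} {pol tpol : S → A → ℝ} {Qpol Qtpol : S × A → ℝ}
    (hQpol : ∀ sa : S × A, Qpol sa =
      r sa + γ * ∑ s', P sa s' * (c pol s' + ∑ a', pol s' a' * Qpol (s', a')))
    (hQtpol : ∀ sa : S × A, Qtpol sa =
      r sa + γ * ∑ s', P sa s' * (c tpol s' + ∑ a', tpol s' a' * Qtpol (s', a')))
    (himp : ∀ s : S,
      (∑ a, pol s a * Qpol (s, a)) + c pol s ≤ (∑ a, tpol s a * Qpol (s, a)) + c tpol s)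
    (sa : S × A) :
    Qpol sa - Qtpol sa ≤
      γ * ∑ s', P sa s' * ∑ a', tpol s' a' * (Qpol (s', a') - Qtpol (s', a')) := by
  have hstate : ∀ s', (c pol s' + ∑ a', pol s' a' * Qpol (s', a')) -
      (c tpol s' + ∑ a', tpol s' a' * Qtpol (s', a')) ≤
        ∑ a', tpol s' a' * (Qpol (s', a') - Qtpol (s', a')) := fun s' => by
    simp only [mul_sub, sum_sub_distrib]
    linarith [himp s']
  rw [hQpol sa, hQtpol sa, add_sub_add_left_eq_sub, ← mul_sub, ← sum_sub_distrib]
  gcongr with s' _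
  rw [← mul_sub]
  exact mul_le_mul_of_nonneg_left (hstate s') (hP0 sa s')

theorem soft_policy_improvement_general {S A : Type*} [Fintype S] [Fintype A]
    (γ : ℝ) (hγ0 : 0 ≤ γ) (hγ1 : γ < 1)
    (r : S × A → ℝ)
    (P : S × A → S → ℝ) (hP0 : ∀ sa s', 0 ≤ P sa s') (hP1 : ∀ sa, ∑ s', P sa s' = 1)
    (c : (S → A → ℝ) → S → ℝ)
    (pol tpol : S → A → ℝ)
    (htpol0 : ∀ s a, 0 ≤ tpol s a) (htpol1 : ∀ s, ∑ a, tpol s a = 1)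
    (Qpol Qtpol : S × A → ℝ)
    (hQpol : ∀ sa : S × A, Qpol sa =
      r sa + γ * ∑ s', P sa s' * (c pol s' + ∑ a', pol s' a' * Qpol (s', a')))
    (hQtpol : ∀ sa : S × A, Qtpol sa =
      r sa + γ * ∑ s', P sa s' * (c tpol s' + ∑ a', tpol s' a' * Qtpol (s', a')))
    (himp : ∀ s : S,
      (∑ a, pol s a * Qpol (s, a)) + c pol s ≤
        (∑ a, tpol s a * Qpol (s, a)) + c tpol s) :
    ∀ sa : S × A, Qpol sa ≤ Qtpol sa := by
  intro sa
  rw [← sub_nonpos]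
  refine nonpos_of_le_mul_bound (f := fun x => Qpol x - Qtpol x) hγ1 (fun M hM x => ?_) sa
  calc Qpol x - Qtpol x
      ≤ γ * ∑ s', P x s' * ∑ a', tpol s' a' * (Qpol (s', a') - Qtpol (s', a')) :=
        bellman_gap_le hγ0 hP0 hQpol hQtpol himp x
    _ ≤ γ * M := by
        gcongr
        exact weighted_sum_le_of_le (hP0 x) (hP1 x) fun s' =>
          weighted_sum_le_of_le (htpol0 s') (htpol1 s') fun a' => hM (s', a')

/-- Policy improvement for causal-weighted soft RL (Lemma 2): if `π̃` improves on `π` at every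
state with respect to `Q^π` plus the policy-dependent bonus `c`, then `Q^π̃ ≥ Q^π` pointwise. -/
theorem soft_policy_improvement {S A : Type*} [Fintype S] [Fintype A]
    (γ : ℝ) (hγ0 : 0 ≤ γ) (hγ1 : γ < 1)
    (r : S × A → ℝ)
    (P : S × A → S → ℝ) (hP0 : ∀ sa s', 0 ≤ P sa s') (hP1 : ∀ sa, ∑ s', P sa s' = 1)
    (c : (S → A → ℝ) → S → ℝ)
    (pol tpol : S → A → ℝ)
    (hpol0 : ∀ s a, 0 ≤ pol s a) (hpol1 : ∀ s, ∑ a, pol s a = 1)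
    (htpol0 : ∀ s a, 0 ≤ tpol s a) (htpol1 : ∀ s, ∑ a, tpol s a = 1)
    (Qpol Qtpol : S × A → ℝ)
    (hQpol : ∀ sa : S × A, Qpol sa =
      r sa + γ * ∑ s', P sa s' * (c pol s' + ∑ a', pol s' a' * Qpol (s', a')))
    (hQtpol : ∀ sa : S × A, Qtpol sa =
      r sa + γ * ∑ s', P sa s' * (c tpol s' + ∑ a', tpol s' a' * Qtpol (s', a')))
    (himp : ∀ s : S,
      (∑ a, pol s a * Qpol (s, a)) + c pol s ≤
        (∑ a, tpol s a * Qpol (s, a)) + c tpol s) :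
    ∀ sa : S × A, Qpol sa ≤ Qtpol sa :=
  soft_policy_improvement_general γ hγ0 hγ1 r P hP0 hP1 c pol tpol htpol0 htpol1 Qpol Qtpol hQpol
    hQtpol himp
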